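/- Let (𝔛, !𝔅, *ℭ, !*ℌ) be an affine fan quadruple with 𝔛 induced by a cone τ. Suppose there is a set 𝔈 of rays of 𝔛 such that 𝔛 is 𝔈-simplicial and τ = Cone(ξ, 𝔈) for some face ξ of τ with dim ξ = dim τ − |𝔈|. Then (𝔛, !𝔅, *ℭ, !*ℌ) is (𝔅♯, ℭ♭, ℌ♯)-sorted if and only if the restricted affine quadruple on the faces of ξ is (𝔅♯ ∩ faces of ξ, ℭ♭ ∩ faces of ξ, ℌ♯ ∩ faces of ξ)-sorted. -/

import Mathlib

namespace ToricPaper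

open scoped BigOperators

/-- The ambient space `N_ℚ = ℚ^n`. -/
abbrev V (n : ℕ) := Fin n → ℚ

variable {n : ℕ}

/-- The cone of nonnegative rational combinations of elements of `A`. -/
def coneHull (A : Set (V n)) : Set (V n) :=
  {x | ∃ t : Finset (V n), ↑t ⊆ A ∧ ∃ c : V n → ℚ,
    (∀ v ∈ t, 0 ≤ c v) ∧ x = ∑ v ∈ t, c v • v}

/-- A rational polyhedral cone: the cone generated by finitely many vectors. -/
def IsPolyCone (σ : Set (V n)) : Prop := ∃ S : Finset (V n), σ = coneHull (S : Set (V n))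

/-- A cone is strongly convex if it contains no line. -/
def StronglyConvex (σ : Set (V n)) : Prop := ∀ x ∈ σ, -x ∈ σ → x = 0

/-- `F` is a face of `σ`, cut out by a linear functional nonnegative on `σ`. -/
def IsFaceOf (F σ : Set (V n)) : Prop :=
  ∃ m : (V n) →ₗ[ℚ] ℚ, (∀ x ∈ σ, 0 ≤ m x) ∧ F = {x ∈ σ | m x = 0}

/-- Dimension of a cone: the rank of its linear span. -/
noncomputable def coneDim (σ : Set (V n)) : ℕ := Module.finrank ℚ (Submodule.span ℚ σ)

/-- A ray of a cone is a one-dimensional face. -/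
def IsRayOf (ν σ : Set (V n)) : Prop := IsFaceOf ν σ ∧ coneDim ν = 1

/-- An abstract ray: a one-dimensional strongly convex rational polyhedral cone. -/
def IsRay (ν : Set (V n)) : Prop := IsPolyCone ν ∧ StronglyConvex ν ∧ coneDim ν = 1

/-- All faces of a cone `τ` (the affine fan induced by `τ`). -/
def faces (τ : Set (V n)) : Set (Set (V n)) := {F | IsFaceOf F τ}

/-- The rays of a cone `τ`. -/
def raysOf (τ : Set (V n)) : Set (Set (V n)) := {ν | IsRayOf ν τ}

/-- A fan: a finite collection of strongly convex rational polyhedral cones, closed under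
taking faces, such that the intersection of two cones is a face of each. -/
def IsFan (X : Set (Set (V n))) : Prop :=
  X.Finite ∧ (∀ σ ∈ X, IsPolyCone σ ∧ StronglyConvex σ) ∧
  (∀ σ ∈ X, ∀ F, IsFaceOf F σ → F ∈ X) ∧
  (∀ σ ∈ X, ∀ σ' ∈ X, IsFaceOf (σ ∩ σ') σ ∧ IsFaceOf (σ ∩ σ') σ')

/-- The rays (one-dimensional cones) belonging to a collection of cones. -/
def raysIn (X : Set (Set (V n))) : Set (Set (V n)) := {ν | ν ∈ X ∧ coneDim ν = 1}

/-- The support of a collection of cones. -/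
def support (X : Set (Set (V n))) : Set (V n) := ⋃₀ X

/-- The data of a fan quadruple `(X, !B, *C, !*H)`: three pairwise disjoint sets of rays. -/
def IsQuadData (X B C H : Set (Set (V n))) : Prop :=
  B ⊆ raysIn X ∧ C ⊆ raysIn X ∧ H ⊆ raysIn X ∧ Disjoint B C ∧ Disjoint B H ∧ Disjoint C H

/-- The data of a fan triple `(X, !B, *C)`: two disjoint sets of rays. -/
def IsTripleData (X B C : Set (Set (V n))) : Prop :=
  B ⊆ raysIn X ∧ C ⊆ raysIn X ∧ Disjoint B C

/-- `ρ` is a sorting function for the (restricted) quadruple on the faces of `ξ`: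
nonnegative on rays of `ξ` in `B`, nonpositive on rays of `ξ` in `C`, zero on rays of `ξ`
in none of `B`, `C`, `H`. -/
def IsSortingOn (ξ : Set (V n)) (B C H : Set (Set (V n))) (ρ : (V n) →ₗ[ℚ] ℚ) : Prop :=
  (∀ ν, IsRayOf ν ξ → ν ∈ B → ∀ x ∈ ν, 0 ≤ ρ x) ∧
  (∀ ν, IsRayOf ν ξ → ν ∈ C → ∀ x ∈ ν, ρ x ≤ 0) ∧
  (∀ ν, IsRayOf ν ξ → ν ∉ B → ν ∉ C → ν ∉ H → ∀ x ∈ ν, ρ x = 0)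

/-- The (restricted) affine quadruple on the faces of `ξ` admits a `Cf`-strict sorting
function: a sorting function which is moreover negative on `ν ∖ {0}` for every `ν ∈ Cf`. -/
def HasStrictSortingOn (ξ : Set (V n)) (B C H Cf : Set (Set (V n))) : Prop :=
  ∃ ρ : (V n) →ₗ[ℚ] ℚ, IsSortingOn ξ B C H ρ ∧
    ∀ ν, IsRayOf ν ξ → ν ∈ Cf → ∀ x ∈ ν, x ≠ 0 → ρ x < 0

/-- A cone `ξ` is `E`-unsettled if no ray of `ξ` lies in `E`. -/
def Unsettled (E : Set (Set (V n))) (ξ : Set (V n)) : Prop := ∀ ν, IsRayOf ν ξ → ν ∉ E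

/-- The quadruple `(X, !B, *C, !*H)` is `(Bs, Cf, Hs)`-sorted. -/
def SortedOn (X B C H Bs Cf Hs : Set (Set (V n))) : Prop :=
  ∀ ξ ∈ X, Unsettled ((B \ Bs) ∪ (H \ Hs)) ξ → HasStrictSortingOn ξ B C H Cf

/-- Partially-sorted: `(∅, C, ∅)`-sorted. -/
def PartiallySortedOn (X B C H : Set (Set (V n))) : Prop := SortedOn X B C H ∅ C ∅

/-- Well-sorted: `(B, C, H)`-sorted. -/
def WellSortedOn (X B C H : Set (Set (V n))) : Prop := SortedOn X B C H B C H

/-- A simplicial cone is generated by linearly independent vectors. -/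
def IsSimplicialCone (σ : Set (V n)) : Prop :=
  ∃ S : Finset (V n), LinearIndependent ℚ (fun v : S => (v : V n)) ∧
    σ = coneHull (S : Set (V n))

/-- A collection of cones is `E`-simplicial: every cone having a ray of `E` as a face is the
join of that ray with a cone of the collection of one less dimension. -/
def ESimplicialOn (X E : Set (Set (V n))) : Prop :=
  ∀ ν ∈ E, ∀ σ ∈ X, IsFaceOf ν σ →
    ∃ ζ ∈ X, σ = coneHull (ζ ∪ ν) ∧ coneDim σ = coneDim ζ + 1

/-- A subdivision of a fan: a fan with the same support, every cone of which is contained in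
a cone of the base. -/
def IsSubdivision (X' X : Set (Set (V n))) : Prop :=
  IsFan X' ∧ support X' = support X ∧ ∀ σ' ∈ X', ∃ σ ∈ X, σ' ⊆ σ

/-- A subdivision is efficient if it introduces no new rays. -/
def IsEfficient (X' X : Set (Set (V n))) : Prop := raysIn X' = raysIn X

/-- `ψ` is a good (convex piecewise-linear) function for the subdivision `X'` relative to the
cones of the base fan `X`: on each cone `τ` of `X`, `ψ` is convex, linear on each cone of
`X'` contained in `τ`, and the maximal subcones of linearity of `ψ` inside `τ` are exactly
the cones of `X'` (i.e. any convex subset of `τ` on which `ψ` is linear lies in one of them). -/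
def IsGoodFor (X X' : Set (Set (V n))) (ψ : V n → ℚ) : Prop :=
  ∀ τ ∈ X, ConvexOn ℚ τ ψ ∧
    (∀ σ' ∈ X', σ' ⊆ τ → ∃ m : (V n) →ₗ[ℚ] ℚ, ∀ x ∈ σ', ψ x = m x) ∧
    (∀ (m : (V n) →ₗ[ℚ] ℚ) (t : Set (V n)), t ⊆ τ → Convex ℚ t →
      (∀ x ∈ t, ψ x = m x) → ∃ σ' ∈ X', σ' ⊆ τ ∧ t ⊆ σ')

/-- Sign conditions of a good sorting function with respect to the quadruple data on `X'`. -/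
def SignedOn (X' B' C' H' : Set (Set (V n))) (ψ : V n → ℚ) : Prop :=
  (∀ ν ∈ B', ∀ x ∈ ν, 0 ≤ ψ x) ∧ (∀ ν ∈ C', ∀ x ∈ ν, ψ x ≤ 0) ∧
  (∀ ν ∈ raysIn X', ν ∉ B' → ν ∉ C' → ν ∉ H' → ∀ x ∈ ν, ψ x = 0)

/-- Sign conditions restricted to the rays contained in a cone `τ`. -/
def SignedOnIn (τ : Set (V n)) (X' B' C' H' : Set (Set (V n))) (ψ : V n → ℚ) : Prop :=
  (∀ ν ∈ B', ν ⊆ τ → ∀ x ∈ ν, 0 ≤ ψ x) ∧ (∀ ν ∈ C', ν ⊆ τ → ∀ x ∈ ν, ψ x ≤ 0) ∧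
  (∀ ν ∈ raysIn X', ν ⊆ τ → ν ∉ B' → ν ∉ C' → ν ∉ H' → ∀ x ∈ ν, ψ x = 0)

/-- A convex subdivision, with respect to a fan quadruple structure on `X'`. -/
def IsConvexSubdiv (X' X B' C' H' : Set (Set (V n))) : Prop :=
  IsSubdivision X' X ∧ ∃ ψ : V n → ℚ, IsGoodFor X X' ψ ∧ SignedOn X' B' C' H' ψ

/-- A locally-convex subdivision: for each cone of the base there is a good sorting function
on that cone. -/
def IsLocallyConvexSubdiv (X' X B' C' H' : Set (Set (V n))) : Prop :=
  IsSubdivision X' X ∧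
    ∀ τ ∈ X, ∃ ψ : V n → ℚ, IsGoodFor {τ} X' ψ ∧ SignedOnIn τ X' B' C' H' ψ

/-- Star subdivision of `X` at a ray `ν` contained in the support of `X`. -/
def starSubdiv (X : Set (Set (V n))) (ν : Set (V n)) : Set (Set (V n)) :=
  {σ | σ ∈ X ∧ ¬ ν ⊆ σ} ∪
  {τ | ∃ σ ∈ X, ν ⊆ σ ∧ ∃ ξ, IsFaceOf ξ σ ∧ ¬ ν ⊆ ξ ∧ τ = coneHull (ξ ∪ ν)}

/-- The set `S` of facets used in the extension construction `Ext(𝔗, ν)`. -/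
noncomputable def extS (τ ν : Set (V n)) : Set (Set (V n)) :=
  if coneDim (coneHull (τ ∪ ν)) = coneDim τ + 1 then {τ}
  else {ζ | (IsFaceOf ζ τ ∧ coneDim ζ + 1 = coneDim τ) ∧
    ∃ m : (V n) →ₗ[ℚ] ℚ, (∀ x ∈ ζ, m x = 0) ∧ (∃ v ∈ ν, v ≠ 0 ∧ m v = -1) ∧
      ∀ x ∈ τ, x ∉ ζ → 0 < m x}

/-- All faces of cones of `extS τ ν`. -/
noncomputable def extFaces (τ ν : Set (V n)) : Set (Set (V n)) :=
  {ξ | ∃ ζ ∈ extS τ ν, IsFaceOf ξ ζ}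

/-- The extension `Ext(𝔗, ν)` of the affine fan of `τ` by the ray `ν`. -/
noncomputable def Ext (τ ν : Set (V n)) : Set (Set (V n)) :=
  {ν} ∪ faces τ ∪ (fun ξ => coneHull (ξ ∪ ν)) '' extFaces τ ν

/-- The extension `Ext(𝔗', ν)` of a subdivision `𝒯'` of the affine fan of `τ` by the ray
`ν`. -/
noncomputable def ExtSub (T' : Set (Set (V n))) (τ ν : Set (V n)) : Set (Set (V n)) :=
  {ν} ∪ T' ∪ (fun ξ => coneHull (ξ ∪ ν)) ''
    {ξ | ∃ ζ' ∈ T', (∃ ζ ∈ extS τ ν, ζ' ⊆ ζ) ∧ IsFaceOf ξ ζ'}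

/-- Sequential convexity of a sequence of star subdivisions (the list gives the rays in the
order in which the star subdivisions are performed). -/
def SeqConvex (B C H : Set (Set (V n))) : Set (Set (V n)) → List (Set (V n)) → Prop
  | _, [] => True
  | X, ν :: rest =>
      IsLocallyConvexSubdiv (starSubdiv X ν) X B C H ∧
      SeqConvex B C H (starSubdiv X ν) rest


/-!
Every face of `ξ` is a face of `τ`, and all its rays are faces of `ξ`, so sortedness restricts
from `τ` to `ξ`. Conversely, for a face `σ` of `τ`, a strict sorting function `ρ'` of the face
`σ ∩ ξ` of `ξ` extends to `σ`: every ray of `σ` is a face of `ξ` or one of the rays of `E`, and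
the dimension count `dim ξ + |E| = dim τ` makes generators of the rays of `E` linearly
independent modulo the span of `ξ`. Hence there is a linear functional that agrees with `ρ'` on
`ξ` and takes the value `-1` on the generators of the rays in `Cf` and `0` on the others.
-/

open Module Submodule

section LinearAlgebra

variable {K W ι : Type*} [Field K] [AddCommGroup W] [Module K W] {v : ι → W}

theorem _root_.LinearIndependent.exists_linearMap_apply_eq (hv : LinearIndependent K v)
    (g : ι → K) : ∃ φ : W →ₗ[K] K, ∀ i, φ (v i) = g i := by
  obtain ⟨φ, hφ⟩ := LinearMap.exists_extend ((Basis.span hv).constr K g)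
  refine ⟨φ, fun i => ?_⟩
  have h := LinearMap.congr_fun hφ (Basis.span hv i)
  rwa [LinearMap.comp_apply, Basis.constr_basis, Basis.span_apply] at h

theorem _root_.LinearIndependent.exists_linearMap_eqOn_of_disjoint (hv : LinearIndependent K v)
    {U : Submodule K W} (hU : Disjoint U (span K (Set.range v))) (f : W →ₗ[K] K) (g : ι → K) :
    ∃ φ : W →ₗ[K] K, (∀ x ∈ U, φ x = f x) ∧ ∀ i, φ (v i) = g i := by
  have hv' : LinearIndependent K (U.mkQ ∘ v) := hv.map (by rw [ker_mkQ]; exact hU.symm)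
  obtain ⟨ψ, hψ⟩ := hv'.exists_linearMap_apply_eq fun i => g i - f (v i)
  refine ⟨f + ψ.comp U.mkQ, fun x hx => ?_, fun i => ?_⟩
  · simp [(Quotient.mk_eq_zero U).2 hx]
  · have h : ψ (Submodule.Quotient.mk (v i)) = g i - f (v i) := hψ i
    simp [h]

theorem _root_.linearIndependent_and_disjoint_of_finrank_sup [FiniteDimensional K W] [Fintype ι]
    {U : Submodule K W} (h : finrank K ↥(U ⊔ span K (Set.range v)) = finrank K U + Fintype.card ι) :
    LinearIndependent K v ∧ Disjoint U (span K (Set.range v)) := by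
  have hle := finrank_range_le_card (R := K) v
  have hsum := finrank_sup_add_finrank_inf_eq U (span K (Set.range v))
  unfold Set.finrank at hle
  refine ⟨linearIndependent_iff_card_eq_finrank_span.2 (by unfold Set.finrank; omega), ?_⟩
  rw [disjoint_iff, ← finrank_eq_zero]
  omega

end LinearAlgebra

section Cones

variable {A A' σ τ ξ F : Set (V n)} {x : V n}

theorem mem_coneHull_self {v : V n} (h : v ∈ A) : v ∈ coneHull A :=
  ⟨{v}, by simpa using h, fun _ => 1, by simp, by simp⟩

theorem smul_mem_coneHull (hx : x ∈ coneHull A) {t : ℚ} (ht : 0 ≤ t) : t • x ∈ coneHull A := by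
  obtain ⟨s, hs, c, hc, rfl⟩ := hx
  exact ⟨s, hs, t • c, fun v hv => mul_nonneg ht (hc v hv), by simp [Finset.smul_sum, smul_smul]⟩

theorem coneHull_mono (h : A ⊆ A') : coneHull A ⊆ coneHull A' := by
  rintro x ⟨s, hs, c, hc, rfl⟩
  exact ⟨s, hs.trans h, c, hc, rfl⟩

theorem coneHull_subset_span (A : Set (V n)) : coneHull A ⊆ span ℚ A := by
  rintro x ⟨s, hs, c, -, rfl⟩
  exact sum_mem fun v hv => smul_mem _ _ (subset_span (hs hv))

theorem span_coneHull (A : Set (V n)) : span ℚ (coneHull A) = span ℚ A :=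
  le_antisymm (span_le.2 (coneHull_subset_span A)) (span_mono fun _ => mem_coneHull_self)

theorem coneDim_coneHull (A : Set (V n)) : coneDim (coneHull A) = coneDim A := by
  rw [coneDim, coneDim, span_coneHull]

theorem coneHull_eval_nonneg {φ : V n →ₗ[ℚ] ℚ} (hφ : ∀ v ∈ A, 0 ≤ φ v) (hx : x ∈ coneHull A) :
    0 ≤ φ x := by
  obtain ⟨s, hs, c, hc, rfl⟩ := hx
  simp only [map_sum, map_smul, smul_eq_mul]
  exact Finset.sum_nonneg fun v hv => mul_nonneg (hc v hv) (hφ v (hs hv))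

-- a nonnegative combination on which `φ ≥ 0` vanishes only if every term does
theorem mem_coneHull_sep_of_eval_eq_zero {φ : V n →ₗ[ℚ] ℚ} (hφ : ∀ v ∈ A, 0 ≤ φ v)
    (hx : x ∈ coneHull A) (hx0 : φ x = 0) : x ∈ coneHull {v ∈ A | φ v = 0} := by
  classical
  obtain ⟨s, hs, c, hc, rfl⟩ := hx
  simp only [map_sum, map_smul, smul_eq_mul] at hx0
  have hterm := (Finset.sum_eq_zero_iff_of_nonneg fun v hv =>
    mul_nonneg (hc v hv) (hφ v (hs hv))).1 hx0
  refine ⟨s.filter (φ · = 0), fun v hv => ?_, c, fun v hv => hc v (Finset.mem_filter.1 hv).1,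
    (Finset.sum_filter_of_ne fun v hv hne => ?_).symm⟩
  · rw [Finset.coe_filter] at hv
    exact ⟨hs hv.1, hv.2⟩
  · exact (mul_eq_zero.1 (hterm v hv)).resolve_left fun h => hne (by rw [h, zero_smul])

theorem sep_coneHull_eq_coneHull_sep {φ : V n →ₗ[ℚ] ℚ} (hφ : ∀ v ∈ A, 0 ≤ φ v) :
    {x ∈ coneHull A | φ x = 0} = coneHull {v ∈ A | φ v = 0} := by
  refine Set.Subset.antisymm (fun x hx => mem_coneHull_sep_of_eval_eq_zero hφ hx.1 hx.2)
    fun x hx => ⟨coneHull_mono (fun v hv => hv.1) hx, ?_⟩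
  have hker : span ℚ {v ∈ A | φ v = 0} ≤ LinearMap.ker φ := span_le.2 fun v hv => hv.2
  exact hker (coneHull_subset_span _ hx)

theorem IsPolyCone.smul_mem (h : IsPolyCone σ) (hx : x ∈ σ) {t : ℚ} (ht : 0 ≤ t) : t • x ∈ σ := by
  obtain ⟨S, rfl⟩ := h
  exact smul_mem_coneHull hx ht

theorem IsFaceOf.subset (h : IsFaceOf F σ) : F ⊆ σ := by
  obtain ⟨m, -, rfl⟩ := h
  exact Set.sep_subset _ _

theorem IsFaceOf.exists_subset_eq_coneHull {S : Finset (V n)} (h : IsFaceOf F (coneHull S)) :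
    ∃ T ⊆ S, F = coneHull T := by
  classical
  obtain ⟨m, hm, rfl⟩ := h
  refine ⟨S.filter (m · = 0), Finset.filter_subset _ _, ?_⟩
  rw [sep_coneHull_eq_coneHull_sep fun v hv => hm v (mem_coneHull_self hv), Finset.coe_filter]
  rfl

theorem IsFaceOf.isPolyCone (h : IsFaceOf F σ) (hσ : IsPolyCone σ) : IsPolyCone F := by
  obtain ⟨S, rfl⟩ := hσ
  obtain ⟨T, -, rfl⟩ := h.exists_subset_eq_coneHull
  exact ⟨T, rfl⟩

theorem IsPolyCone.finite_faces (hτ : IsPolyCone τ) : (faces τ).Finite := by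
  classical
  obtain ⟨S, rfl⟩ := hτ
  refine (S.powerset.image fun T => coneHull (T : Set (V n))).finite_toSet.subset fun F hF => ?_
  obtain ⟨T, hT, rfl⟩ := IsFaceOf.exists_subset_eq_coneHull hF
  simpa using ⟨T, hT, rfl⟩

theorem IsFaceOf.inter_of_subset (h : IsFaceOf F τ) (hξ : ξ ⊆ τ) : IsFaceOf (F ∩ ξ) ξ := by
  obtain ⟨m, hm, rfl⟩ := h
  refine ⟨m, fun x hx => hm x (hξ hx), ?_⟩
  ext x
  exact ⟨fun ⟨⟨_, h0⟩, hx⟩ => ⟨hx, h0⟩, fun ⟨hx, h0⟩ => ⟨⟨hξ hx, h0⟩, hx⟩⟩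

theorem IsFaceOf.of_subset (h : IsFaceOf F τ) (hF : F ⊆ ξ) (hξ : ξ ⊆ τ) : IsFaceOf F ξ := by
  simpa [Set.inter_eq_left.2 hF] using h.inter_of_subset hξ

theorem exists_add_mul_pos {ι : Type*} (s : Finset ι) (a b : ι → ℚ) :
    ∃ N : ℚ, ∀ i ∈ s, 0 < b i → 0 < a i + N * b i := by
  obtain ⟨N, hN⟩ := (s.image fun i => -a i / b i).bddAbove
  refine ⟨N + 1, fun i hi hb => ?_⟩
  have := (div_le_iff₀ hb).1 (hN (Finset.mem_image_of_mem _ hi))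
  linarith

theorem IsFaceOf.trans (h₁ : IsFaceOf F σ) (h₂ : IsFaceOf σ τ) (hτ : IsPolyCone τ) :
    IsFaceOf F τ := by
  obtain ⟨S, rfl⟩ := hτ
  obtain ⟨m', hm', rfl⟩ := h₂
  obtain ⟨m, hm, rfl⟩ := h₁
  have hm'S : ∀ v ∈ (S : Set (V n)), 0 ≤ m' v := fun v hv => hm' v (mem_coneHull_self hv)
  rw [sep_coneHull_eq_coneHull_sep hm'S] at hm ⊢
  have hmS : ∀ v ∈ {v ∈ (S : Set (V n)) | m' v = 0}, 0 ≤ m v :=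
    fun v hv => hm v (mem_coneHull_self hv)
  -- for `N ≫ 0`, `m + N • m'` is positive on the generators outside `ker m'`
  obtain ⟨N, hN⟩ := exists_add_mul_pos S (fun v => m v) (fun v => m' v)
  have hρ : ∀ v ∈ (S : Set (V n)),
      0 ≤ (m + N • m') v ∧ ((m + N • m') v = 0 ↔ m' v = 0 ∧ m v = 0) := by
    intro v hv
    simp only [LinearMap.add_apply, LinearMap.smul_apply, smul_eq_mul]
    rcases (hm'S v hv).eq_or_lt with h0 | hpos
    · simp [← h0, hmS v ⟨hv, h0.symm⟩]
    · have := hN v hv hpos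
      exact ⟨this.le, fun h => absurd h this.ne', fun h => absurd h.1 hpos.ne'⟩
  refine ⟨m + N • m', fun x => coneHull_eval_nonneg fun v hv => (hρ v hv).1, ?_⟩
  rw [sep_coneHull_eq_coneHull_sep hmS, sep_coneHull_eq_coneHull_sep fun v hv => (hρ v hv).1]
  congr 1
  ext v
  exact ⟨fun ⟨⟨hv, h'⟩, h⟩ => ⟨hv, (hρ v hv).2.2 ⟨h', h⟩⟩,
    fun ⟨hv, h⟩ => ⟨⟨hv, ((hρ v hv).2.1 h).1⟩, ((hρ v hv).2.1 h).2⟩⟩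

end Cones

section Rays

variable {ν ν' σ τ ξ : Set (V n)} {E : Set (Set (V n))}

theorem exists_mem_ne_zero_of_coneDim_ne_zero {s : Set (V n)} (h : coneDim s ≠ 0) :
    ∃ u ∈ s, u ≠ 0 := by
  by_contra! hs
  exact h (by rw [coneDim, span_eq_bot.2 hs, finrank_bot])

theorem IsRayOf.exists_nonneg_smul_eq (hν : IsRayOf ν τ) (hτ : IsPolyCone τ)
    (hsc : StronglyConvex τ) {u x : V n} (hu : u ∈ ν) (hu0 : u ≠ 0) (hx : x ∈ ν) :
    ∃ t : ℚ, 0 ≤ t ∧ x = t • u := by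
  obtain ⟨t, ht⟩ := (finrank_eq_one_iff_of_nonzero' (⟨u, subset_span hu⟩ : span ℚ ν)
    (by simpa using hu0)).1 hν.2 ⟨x, subset_span hx⟩
  have hxt : x = t • u := congrArg Subtype.val ht.symm
  rcases le_or_gt 0 t with ht0 | ht0
  · exact ⟨t, ht0, hxt⟩
  · have hnx : -x ∈ ν := by
      rw [hxt, ← neg_smul]
      exact (hν.1.isPolyCone hτ).smul_mem hu (by linarith)
    exact ⟨0, le_rfl, by rw [zero_smul]; exact hsc x (hν.1.subset hx) (hν.1.subset hnx)⟩

theorem IsRayOf.eq_of_mem (hν : IsRayOf ν τ) (hν' : IsRayOf ν' τ) (hτ : IsPolyCone τ)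
    (hsc : StronglyConvex τ) {u : V n} (hu : u ∈ ν) (hu' : u ∈ ν') (hu0 : u ≠ 0) : ν = ν' := by
  have hsub : ∀ {μ μ'}, IsRayOf μ τ → IsRayOf μ' τ → u ∈ μ → u ∈ μ' → μ ⊆ μ' := by
    intro μ μ' hμ hμ' hu hu' x hx
    obtain ⟨t, ht, rfl⟩ := hμ.exists_nonneg_smul_eq hτ hsc hu hu0 hx
    exact (hμ'.1.isPolyCone hτ).smul_mem hu' ht
  exact (hsub hν hν' hu hu').antisymm (hsub hν' hν hu' hu)

theorem IsRayOf.isFaceOf_or_mem (hν : IsRayOf ν τ) (hτ : IsPolyCone τ) (hsc : StronglyConvex τ)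
    (hξ : IsFaceOf ξ τ) (hgen : τ = coneHull (ξ ∪ ⋃₀ E)) (hE : E ⊆ raysOf τ) :
    IsFaceOf ν ξ ∨ ν ∈ E := by
  obtain ⟨m, hm, hνm⟩ := hν.1
  have hνA : ν = coneHull {v ∈ ξ ∪ ⋃₀ E | m v = 0} := by
    rw [hνm, ← sep_coneHull_eq_coneHull_sep fun v hv => hm v (hgen ▸ mem_coneHull_self hv),
      ← hgen]
  obtain ⟨u, hu, hu0⟩ := exists_mem_ne_zero_of_coneDim_ne_zero
    (s := {v ∈ ξ ∪ ⋃₀ E | m v = 0}) (by rw [← coneDim_coneHull, ← hνA, hν.2]; exact one_ne_zero)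
  have huν : u ∈ ν := hνA ▸ mem_coneHull_self hu
  rcases hu.1 with huξ | ⟨e, he, hue⟩
  · refine Or.inl (hν.1.of_subset (fun x hx => ?_) hξ.subset)
    obtain ⟨t, ht, rfl⟩ := hν.exists_nonneg_smul_eq hτ hsc huν hu0 hx
    exact (hξ.isPolyCone hτ).smul_mem huξ ht
  · exact Or.inr (hν.eq_of_mem (hE he) hτ hsc huν hue hu0 ▸ he)

theorem IsRayOf.trans (hν : IsRayOf ν σ) (hσ : IsFaceOf σ τ) (hτ : IsPolyCone τ) :
    IsRayOf ν τ :=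
  ⟨hν.1.trans hσ hτ, hν.2⟩

theorem IsRayOf.inter_of_isFaceOf (hν : IsRayOf ν σ) (hνξ : IsFaceOf ν ξ) :
    IsRayOf ν (σ ∩ ξ) :=
  ⟨hν.1.of_subset (Set.subset_inter hν.1.subset hνξ.subset) Set.inter_subset_left, hν.2⟩

theorem IsRayOf.of_inter (hν : IsRayOf ν (σ ∩ ξ)) (hσ : IsFaceOf σ τ) (hξ : IsFaceOf ξ τ)
    (hτ : IsPolyCone τ) : IsRayOf ν σ ∧ IsFaceOf ν ξ := by
  have hσξ : IsFaceOf (σ ∩ ξ) σ := Set.inter_comm ξ σ ▸ hξ.inter_of_subset hσ.subset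
  exact ⟨hν.trans hσξ (hσ.isPolyCone hτ),
    hν.1.trans (hσ.inter_of_subset hξ.subset) (hξ.isPolyCone hτ)⟩

theorem exists_linearMap_eqOn_of_coneHull_union_rays (hτ : IsPolyCone τ)
    (hsc : StronglyConvex τ) (hE : E ⊆ raysOf τ) (hgen : τ = coneHull (ξ ∪ ⋃₀ E))
    (hdim : coneDim ξ + E.ncard = coneDim τ) (f : V n →ₗ[ℚ] ℚ) (D : Set (Set (V n))) :
    ∃ φ : V n →ₗ[ℚ] ℚ, (∀ x ∈ ξ, φ x = f x) ∧ (∀ e ∈ E, e ∈ D → ∀ x ∈ e, x ≠ 0 → φ x < 0) ∧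
      ∀ e ∈ E, e ∉ D → ∀ x ∈ e, φ x = 0 := by
  classical
  have := (hτ.finite_faces.subset fun e he => (hE he).1).fintype
  choose u hu hu0 using fun e : E =>
    exists_mem_ne_zero_of_coneDim_ne_zero ((hE e.2).2 ▸ one_ne_zero)
  have hsmul : ∀ e : E, ∀ x ∈ (e : Set (V n)), ∃ t : ℚ, 0 ≤ t ∧ x = t • u e :=
    fun e x hx => (hE e.2).exists_nonneg_smul_eq hτ hsc (hu e) (hu0 e) hx
  have hspan : span ℚ τ = span ℚ ξ ⊔ span ℚ (Set.range u) := by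
    rw [hgen, span_coneHull, span_union]
    congr 1
    refine le_antisymm (span_le.2 ?_) (span_le.2 ?_)
    · rintro x ⟨e, he, hx⟩
      obtain ⟨t, -, rfl⟩ := hsmul ⟨e, he⟩ x hx
      exact smul_mem _ _ (subset_span ⟨⟨e, he⟩, rfl⟩)
    · rintro _ ⟨e, rfl⟩
      exact subset_span ⟨e, e.2, hu e⟩
  obtain ⟨hli, hdisj⟩ := linearIndependent_and_disjoint_of_finrank_sup (U := span ℚ ξ) (v := u)
    (by rw [← hspan, ← Nat.card_eq_fintype_card, Nat.card_coe_set_eq]; exact hdim.symm)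
  obtain ⟨φ, hφξ, hφu⟩ := hli.exists_linearMap_eqOn_of_disjoint hdisj f
    fun e => if (e : Set (V n)) ∈ D then -1 else 0
  refine ⟨φ, fun x hx => hφξ x (subset_span hx), fun e he heD x hx hx0 => ?_,
    fun e he heD x hx => ?_⟩
  · obtain ⟨t, ht, rfl⟩ := hsmul ⟨e, he⟩ x hx
    have ht0 : 0 < t := ht.lt_of_ne (by rintro rfl; simp at hx0)
    simp [hφu, heD, ht0]
  · obtain ⟨t, -, rfl⟩ := hsmul ⟨e, he⟩ x hx
    simp [hφu, heD]

end Rays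

section Sorting

variable {σ : Set (V n)} {F B C H Bs Cf Hs : Set (Set (V n))}

theorem unsettled_inter_iff (hF : ∀ ν, IsRayOf ν σ → ν ∈ F) :
    Unsettled ((B ∩ F) \ (Bs ∩ F) ∪ (H ∩ F) \ (Hs ∩ F)) σ ↔ Unsettled (B \ Bs ∪ H \ Hs) σ := by
  simp +contextual [Unsettled, hF]

theorem hasStrictSortingOn_inter_iff (hF : ∀ ν, IsRayOf ν σ → ν ∈ F) :
    HasStrictSortingOn σ (B ∩ F) (C ∩ F) (H ∩ F) (Cf ∩ F) ↔ HasStrictSortingOn σ B C H Cf := by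
  simp +contextual [HasStrictSortingOn, IsSortingOn, hF]

theorem hasStrictSortingOn_of_eqOn {σ' : Set (V n)} {E : Set (Set (V n))}
    {ρ ρ' : V n →ₗ[ℚ] ℚ} (hρ' : IsSortingOn σ' B C H ρ')
    (hρ'Cf : ∀ ν, IsRayOf ν σ' → ν ∈ Cf → ∀ x ∈ ν, x ≠ 0 → ρ' x < 0)
    (hrays : ∀ ν, IsRayOf ν σ → IsRayOf ν σ' ∨ ν ∈ E) (hρρ' : ∀ x ∈ σ', ρ x = ρ' x)
    (hρCf : ∀ ν ∈ E, ν ∈ Cf → ∀ x ∈ ν, x ≠ 0 → ρ x < 0)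
    (hρ0 : ∀ ν ∈ E, ν ∉ Cf → ∀ x ∈ ν, ρ x = 0) (hBCf : Disjoint B Cf) (hCf : Cf ⊆ C) :
    HasStrictSortingOn σ B C H Cf := by
  have hσ' : ∀ ν, IsRayOf ν σ' → ∀ x ∈ ν, ρ x = ρ' x :=
    fun ν hν x hx => hρρ' x (hν.1.subset hx)
  have hle : ∀ ν ∈ E, ∀ x ∈ ν, ρ x ≤ 0 := by
    intro ν hν x hx
    by_cases hνCf : ν ∈ Cf
    · rcases eq_or_ne x 0 with rfl | hx0
      · simp
      · exact (hρCf ν hν hνCf x hx hx0).le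
    · exact (hρ0 ν hν hνCf x hx).le
  refine ⟨ρ, ⟨fun ν hν hB x hx => ?_, fun ν hν hC x hx => ?_, fun ν hν hB hC hH x hx => ?_⟩,
    fun ν hν hνCf x hx hx0 => ?_⟩ <;> rcases hrays ν hν with h | h
  · exact hσ' ν h x hx ▸ hρ'.1 ν h hB x hx
  · exact (hρ0 ν h (Set.disjoint_left.1 hBCf hB) x hx).ge
  · exact hσ' ν h x hx ▸ hρ'.2.1 ν h hC x hx
  · exact hle ν h x hx
  · exact hσ' ν h x hx ▸ hρ'.2.2 ν h hB hC hH x hx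
  · exact hρ0 ν h (fun h' => hC (hCf h')) x hx
  · exact hσ' ν h x hx ▸ hρ'Cf ν h hνCf x hx hx0
  · exact hρCf ν h hνCf x hx hx0

end Sorting

theorem sorted_iff_sorted_of_ESimplicial_extension_general {n : ℕ} (τ ξ : Set (V n))
    (B C H Bs Cf Hs E : Set (Set (V n)))
    (hτ : IsPolyCone τ) (hsc : StronglyConvex τ)
    (hQ : IsQuadData (faces τ) B C H)
    (hCf : Cf ⊆ C)
    (hE : E ⊆ raysOf τ)
    (hξ : IsFaceOf ξ τ) (hgen : τ = coneHull (ξ ∪ ⋃₀ E))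
    (hdim : coneDim ξ + E.ncard = coneDim τ) :
    SortedOn (faces τ) B C H Bs Cf Hs ↔
      SortedOn (faces ξ) (B ∩ faces ξ) (C ∩ faces ξ) (H ∩ faces ξ)
        (Bs ∩ faces ξ) (Cf ∩ faces ξ) (Hs ∩ faces ξ) := by
  have hξpoly : IsPolyCone ξ := hξ.isPolyCone hτ
  refine ⟨fun hsort σ hσ hun => ?_, fun hsort σ hσ hun => ?_⟩
  · have hrays : ∀ ν, IsRayOf ν σ → ν ∈ faces ξ := fun ν hν => hν.1.trans hσ hξpoly
    exact (hasStrictSortingOn_inter_iff hrays).2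
      (hsort σ (hσ.trans hξ hτ) ((unsettled_inter_iff hrays).1 hun))
  · have hrays : ∀ ν, IsRayOf ν (σ ∩ ξ) → IsRayOf ν σ ∧ ν ∈ faces ξ :=
      fun ν hν => hν.of_inter hσ hξ hτ
    have hunξ : Unsettled (B \ Bs ∪ H \ Hs) (σ ∩ ξ) := fun ν hν => hun ν (hrays ν hν).1
    obtain ⟨ρ', hρ', hρ'Cf⟩ := (hasStrictSortingOn_inter_iff fun ν hν => (hrays ν hν).2).1 <|
      hsort (σ ∩ ξ) (hσ.inter_of_subset hξ.subset)
        ((unsettled_inter_iff fun ν hν => (hrays ν hν).2).2 hunξ)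
    obtain ⟨ρ, hρξ, hρCf, hρ0⟩ :=
      exists_linearMap_eqOn_of_coneHull_union_rays hτ hsc hE hgen hdim ρ' Cf
    refine hasStrictSortingOn_of_eqOn hρ' hρ'Cf (fun ν hν => ?_) (fun x hx => hρξ x hx.2)
      hρCf hρ0 (hQ.2.2.2.1.mono_right hCf) hCf
    exact ((hν.trans hσ hτ).isFaceOf_or_mem hτ hsc hξ hgen hE).imp_left hν.inter_of_isFaceOf

/-- For an affine fan quadruple with `τ = Cone(ξ, E)`, `X` being `E`-simplicial,
sortedness is equivalent to sortedness of the restriction to the faces of `ξ`. -/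
theorem sorted_iff_sorted_of_ESimplicial_extension {n : ℕ} (τ ξ : Set (V n))
    (B C H Bs Cf Hs E : Set (Set (V n)))
    (hτ : IsPolyCone τ) (hsc : StronglyConvex τ)
    (hQ : IsQuadData (faces τ) B C H)
    (hBs : Bs ⊆ B) (hCf : Cf ⊆ C) (hHs : Hs ⊆ H)
    (hE : E ⊆ raysOf τ) (hEsimp : ESimplicialOn (faces τ) E)
    (hξ : IsFaceOf ξ τ) (hgen : τ = coneHull (ξ ∪ ⋃₀ E))
    (hdim : coneDim ξ + E.ncard = coneDim τ) :
    SortedOn (faces τ) B C H Bs Cf Hs ↔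
      SortedOn (faces ξ) (B ∩ faces ξ) (C ∩ faces ξ) (H ∩ faces ξ)
        (Bs ∩ faces ξ) (Cf ∩ faces ξ) (Hs ∩ faces ξ) :=
  sorted_iff_sorted_of_ESimplicial_extension_general τ ξ B C H Bs Cf Hs E hτ hsc hQ hCf hE hξ hgen
    hdim

end ToricPaper
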